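/- arXiv:1112.4151 — 2 statements merged into one kernel-verified Lean document; each statement's English description precedes it below -/
import Mathlib

section
/- The Harer–Zagier recursion (m+1)c_g(m) = 2(2m-1)c_g(m-1) + (2m-1)(m-1)(2m-3)c_{g-1}(m-2) is equivalent to the differential equation z(1-4z)·C_g'(z) + (1-2z)·C_g(z) = z²·(4z³·C_{g-1}'''(z) + 24z²·C_{g-1}''(z) + 27z·C_{g-1}'(z) + 3·C_{g-1}(z)) for the generating functions C_g(z) = Σ_m c_g(m) z^m, with initial condition C_g(0) = 0 for g ≥ 1. -/
/-!
Both sides of the differential equation are built from `X` and the Euler operator `θ = X d/dX`,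
which acts on `X^n` by multiplication by `n`. Comparing coefficients of `X^(m+1)`, the left side
contributes `(m+2) c_g(m+1) - 2(2m+1) c_g(m)` and the right side, which factors as
`X² (2θ+1)(θ+1)(2θ+3) C_{g-1}`, contributes `(2m+1) m (2m-1) c_{g-1}(m-1)`; the constant terms
give `c_g(0) = 0`.
-/

open PowerSeries

namespace PowerSeries

variable {R : Type*}

section CommSemiring

variable [CommSemiring R]

theorem coeff_ofNat_mul (f : R⟦X⟧) (a n : ℕ) [a.AtLeastTwo] :
    coeff n (ofNat(a) * f) = ofNat(a) * coeff n f := by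
  rw [← map_ofNat C a, coeff_C_mul]

theorem coeff_X_pow_mul_iterate_derivative (f : R⟦X⟧) (k n : ℕ) :
    coeff n (X ^ k * (d⁄dX R)^[k] f) = n.descFactorial k * coeff n f := by
  rw [coeff_X_pow_mul']
  split_ifs with hkn
  · obtain ⟨j, rfl⟩ := Nat.exists_eq_add_of_le' hkn
    rw [coeff_iterate_derivative, Nat.add_sub_cancel, ← Nat.add_descFactorial_eq_ascFactorial]
  · rw [Nat.descFactorial_eq_zero_iff_lt.mpr (by omega), Nat.cast_zero, zero_mul]

theorem coeff_X_mul_derivative (f : R⟦X⟧) (n : ℕ) :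
    coeff n (X * d⁄dX R f) = n * coeff n f := by
  simpa using coeff_X_pow_mul_iterate_derivative f 1 n

theorem eq_iff_constantCoeff_eq_and_coeff_succ_eq {f g : R⟦X⟧} :
    f = g ↔ constantCoeff f = constantCoeff g ∧ ∀ m, coeff (m + 1) f = coeff (m + 1) g := by
  refine ⟨by rintro rfl; simp, fun ⟨h0, hsucc⟩ ↦ ext fun n ↦ ?_⟩
  cases n with
  | zero => simpa using h0
  | succ m => exact hsucc m

end CommSemiring

section CommRing

variable [CommRing R]

theorem constantCoeff_harerZagier_lhs (f : R⟦X⟧) :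
    constantCoeff (X * (1 - 4 * X) * d⁄dX R f + (1 - 2 * X) * f) = constantCoeff f := by
  simp

theorem coeff_succ_harerZagier_lhs (f : R⟦X⟧) (m : ℕ) :
    coeff (m + 1) (X * (1 - 4 * X) * d⁄dX R f + (1 - 2 * X) * f) =
      (m + 2) * coeff (m + 1) f - 2 * (2 * m + 1) * coeff m f := by
  have h : X * (1 - 4 * X) * d⁄dX R f + (1 - 2 * X) * f =
      X * d⁄dX R f + f - X * (4 * (X * d⁄dX R f) + 2 * f) := by ring
  simp only [h, map_sub, map_add, coeff_succ_X_mul, coeff_ofNat_mul, coeff_derivative,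
    coeff_X_mul_derivative]
  ring

/-- With `θ = X d/dX`, the operator is `4θ(θ-1)(θ-2) + 24θ(θ-1) + 27θ + 3 = (2θ+1)(θ+1)(2θ+3)`. -/
theorem coeff_harerZagier_rhs_factor (f : R⟦X⟧) (n : ℕ) :
    coeff n (4 * X ^ 3 * d⁄dX R (d⁄dX R (d⁄dX R f)) + 24 * X ^ 2 * d⁄dX R (d⁄dX R f) +
        27 * X * d⁄dX R f + 3 * f) =
      (2 * n + 1) * (n + 1) * (2 * n + 3) * coeff n f := by
  have h3 := coeff_X_pow_mul_iterate_derivative f 3 n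
  have h2 := coeff_X_pow_mul_iterate_derivative f 2 n
  simp only [Function.iterate_succ, Function.iterate_zero, Function.comp_apply, id] at h3 h2
  rw [← descPochhammer_eval_eq_descFactorial] at h3 h2
  simp only [mul_assoc, map_add, coeff_ofNat_mul, h3, h2, coeff_X_mul_derivative]
  simp only [descPochhammer_succ_right, descPochhammer_zero, Nat.cast_zero, sub_zero, one_mul,
    Nat.cast_one, Nat.cast_ofNat, Polynomial.eval_mul, Polynomial.eval_X, Polynomial.eval_sub,
    Polynomial.eval_one, Polynomial.eval_ofNat]
  ring

theorem constantCoeff_harerZagier_rhs (f : R⟦X⟧) :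
    constantCoeff (X ^ 2 * (4 * X ^ 3 * d⁄dX R (d⁄dX R (d⁄dX R f)) +
      24 * X ^ 2 * d⁄dX R (d⁄dX R f) + 27 * X * d⁄dX R f + 3 * f)) = 0 := by
  simp

theorem coeff_succ_harerZagier_rhs (f : R⟦X⟧) (m : ℕ) :
    coeff (m + 1) (X ^ 2 * (4 * X ^ 3 * d⁄dX R (d⁄dX R (d⁄dX R f)) +
      24 * X ^ 2 * d⁄dX R (d⁄dX R f) + 27 * X * d⁄dX R f + 3 * f)) =
      (2 * m + 1) * m * (2 * m - 1) * coeff (m - 1) f := by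
  cases m with
  | zero => simp [coeff_X_pow_mul']
  | succ k =>
    rw [show k + 1 + 1 = k + 2 by rfl, coeff_X_pow_mul, coeff_harerZagier_rhs_factor,
      Nat.add_sub_cancel]
    push_cast
    ring

theorem harerZagier_ode_iff (f h : R⟦X⟧) :
    X * (1 - 4 * X) * d⁄dX R f + (1 - 2 * X) * f =
        X ^ 2 * (4 * X ^ 3 * d⁄dX R (d⁄dX R (d⁄dX R h)) +
          24 * X ^ 2 * d⁄dX R (d⁄dX R h) + 27 * X * d⁄dX R h + 3 * h) ↔
      constantCoeff f = 0 ∧ ∀ m : ℕ, (m + 2) * coeff (m + 1) f =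
        2 * (2 * m + 1) * coeff m f + (2 * m + 1) * m * (2 * m - 1) * coeff (m - 1) h := by
  simp only [eq_iff_constantCoeff_eq_and_coeff_succ_eq, constantCoeff_harerZagier_lhs,
    constantCoeff_harerZagier_rhs, coeff_succ_harerZagier_lhs, coeff_succ_harerZagier_rhs,
    sub_eq_iff_eq_add']

end CommRing

end PowerSeries

/-- The Harer–Zagier recursion for the coefficients `c g m` is equivalent to the
differential equation
`z(1-4z)·C_g'(z) + (1-2z)·C_g(z) = z²(4z³C_{g-1}''' + 24z²C_{g-1}'' + 27zC_{g-1}' + 3C_{g-1})`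
for the generating functions `C_g(z) = Σ_m c_g(m) z^m`, with initial condition
`C_g(0) = 0` for `g ≥ 1`. -/
theorem harer_zagier_recursion_iff_ODE (c : ℕ → ℕ → ℚ)
    (C : ℕ → PowerSeries ℚ) (hC : ∀ g, C g = PowerSeries.mk (c g)) :
    ((∀ g : ℕ, 1 ≤ g → ∀ m : ℕ,
        ((m : ℚ) + 2) * c g (m + 1) =
          2 * (2 * (m : ℚ) + 1) * c g m +
            (2 * (m : ℚ) + 1) * (m : ℚ) * (2 * (m : ℚ) - 1) * c (g - 1) (m - 1)) ∧
      (∀ g : ℕ, 1 ≤ g → c g 0 = 0))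
    ↔
    (∀ g : ℕ, 1 ≤ g →
      X * (1 - 4 * X) * derivativeFun (C g) + (1 - 2 * X) * C g =
        X ^ 2 * (4 * X ^ 3 * derivativeFun (derivativeFun (derivativeFun (C (g - 1)))) +
          24 * X ^ 2 * derivativeFun (derivativeFun (C (g - 1))) +
          27 * X * derivativeFun (C (g - 1)) + 3 * C (g - 1)) ∧
      PowerSeries.constantCoeff (C g) = 0) := by
  have hd : ∀ f : ℚ⟦X⟧, derivativeFun f = d⁄dX ℚ f := fun _ ↦ rfl
  simp only [hd, harerZagier_ode_iff, hC, constantCoeff_mk, coeff_mk]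
  exact ⟨fun ⟨hrec, h0⟩ g hg ↦ ⟨⟨h0 g hg, hrec g hg⟩, h0 g hg⟩,
    fun h ↦ ⟨fun g hg ↦ (h g hg).1.2, fun g hg ↦ (h g hg).2⟩⟩
end

section
/- Every shadow of genus g ≥ 1 (over one backbone) contains at least 2g arcs and at most 6g - 2 arcs; consequently, for fixed genus g, there exist only finitely many shadows of genus g. -/
/-!
The boundary components of a diagram `μ` with `m` arcs are the cycles of `σ = γ ∘ μ`, where
`γ` is the cyclic rotation of the `2m` endpoints; Euler's formula reads `r = m + 1 - 2g`, and
comparing signs gives `r ≡ m + 1 (mod 2)`. In a shadow `σ` has no fixed point (that would be an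
arc joining two neighbours, which crosses nothing), and any 2-cycle of `σ` not through vertex `0`
is a stack of two parallel arcs. So all cycles but one have length at least 3, whence
`3r ≤ 2m + 1`, i.e. `m ≤ 6g - 2`, while `r ≥ 1` gives `2g ≤ m`. Bounding `m` leaves finitely
many shadows.
-/

open PowerSeries Finset

/-- Number of orbits of a function on a type. -/
noncomputable def numOrbits {α : Type*} (f : α → α) : ℕ :=
  Nat.card (Quotient (Relation.EqvGen.setoid (fun x y => f x = y)))

/-- Number of boundary components of the fatgraph of a chord diagram given by
an involution `μ` on `Fin N` (backbone collapsed to one vertex). -/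
noncomputable def numBoundary {N : ℕ} (μ : Equiv.Perm (Fin N)) : ℕ :=
  numOrbits (fun v => finRotate N (μ v))

/-- Genus of a diagram on `N` vertices: `r = N/2 + 1 - 2g`. -/
noncomputable def diagGenus {N : ℕ} (μ : Equiv.Perm (Fin N)) : ℕ :=
  (N / 2 + 1 - numBoundary μ) / 2

/-- `μ` is a perfect matching: a fixed-point-free involution. -/
def IsMatching {N : ℕ} (μ : Equiv.Perm (Fin N)) : Prop :=
  (∀ i, μ (μ i) = i) ∧ ∀ i, μ i ≠ i

/-- the number of perfect matchings on `2m` points of genus `g`. -/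
noncomputable def cCount (g m : ℕ) : ℕ :=
  Nat.card {μ : Equiv.Perm (Fin (2 * m)) // IsMatching μ ∧ diagGenus μ = g}
/-- arc left endpoints: `i` is the left endpoint of an arc of `μ`. -/
def IsLeft {N : ℕ} (μ : Equiv.Perm (Fin N)) (i : Fin N) : Prop :=
  (i : ℕ) < (μ i : ℕ)

/-- the arcs with left endpoints `i` and `k` cross: `i < k < μ i < μ k`. -/
def Cross {N : ℕ} (μ : Equiv.Perm (Fin N)) (i k : Fin N) : Prop :=
  (i : ℕ) < (k : ℕ) ∧ (k : ℕ) < (μ i : ℕ) ∧ (μ i : ℕ) < (μ k : ℕ)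

def CrossSym {N : ℕ} (μ : Equiv.Perm (Fin N)) (i k : Fin N) : Prop :=
  Cross μ i k ∨ Cross μ k i

/-- arcs `i`, `k` belong to the same connected component of the crossing graph. -/
def SameComp {N : ℕ} (μ : Equiv.Perm (Fin N)) : Fin N → Fin N → Prop :=
  Relation.ReflTransGen (CrossSym μ)

open Classical in
/-- the set of vertices lying on arcs in the crossing component of arc `i`. -/
noncomputable def compVerts {N : ℕ} (μ : Equiv.Perm (Fin N)) (i : Fin N) : Finset (Fin N) :=
  Finset.univ.filter
    (fun v => (μ v ≠ v) ∧ SameComp μ i (if (v : ℕ) < (μ v : ℕ) then v else μ v))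

/-- the genus of the sub-diagram of `μ` induced on a `μ`-closed vertex set `V`. -/
noncomputable def subGenus {N : ℕ} (μ : Equiv.Perm (Fin N)) (V : Finset (Fin N)) : ℕ :=
  let e := V.orderIsoOfFin rfl
  let f : Fin V.card → Fin V.card :=
    fun j => if h : μ (e j) ∈ V then e.symm ⟨μ (e j), h⟩ else j
  (V.card / 2 + 1 - numOrbits (fun j => finRotate V.card (f j))) / 2

/-- every irreducible shadow (crossing component) of `μ` has genus at most `γ`. -/
def GammaBounded {N : ℕ} (γ : ℕ) (μ : Equiv.Perm (Fin N)) : Prop :=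
  ∀ i : Fin N, IsLeft μ i → subGenus μ (compVerts μ i) ≤ γ

/-- no two parallel adjacent arcs, i.e. all stacks have length one. -/
def NoStack {N : ℕ} (μ : Equiv.Perm (Fin N)) : Prop :=
  ¬ ∃ i k : Fin N, IsLeft μ i ∧ IsLeft μ k ∧ (k : ℕ) = (i : ℕ) + 1 ∧
      (μ k : ℕ) + 1 = (μ i : ℕ)

/-- a shadow: a perfect matching in which every arc crosses some arc
and which has no stacks of length greater than one. -/
def IsShadow {N : ℕ} (μ : Equiv.Perm (Fin N)) : Prop :=
  IsMatching μ ∧ (∀ i, IsLeft μ i → ∃ k, CrossSym μ i k) ∧ NoStack μ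

/-- irreducibility: the crossing graph is connected. -/
def IrreducibleShadowDiagram {N : ℕ} (μ : Equiv.Perm (Fin N)) : Prop :=
  ∀ i k : Fin N, IsLeft μ i → IsLeft μ k → SameComp μ i k

/-- the number of irreducible shadows of genus `g` with `m` arcs. -/
noncomputable def iCount (g m : ℕ) : ℕ :=
  Nat.card {μ : Equiv.Perm (Fin (2 * m)) // IsShadow μ ∧ IrreducibleShadowDiagram μ ∧ diagGenus μ = g}

open Equiv

theorem Fintype.mul_card_le_card_add_one {α β : Type*} [Fintype α] [Fintype β] [DecidableEq β]
    (f : α → β) (b₀ : β) {k : ℕ} (h₀ : k ≤ #{a | f a = b₀} + 1)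
    (h : ∀ b ≠ b₀, k ≤ #{a | f a = b}) :
    k * Fintype.card β ≤ Fintype.card α + 1 := by
  have hfiber (b : β) : k ≤ #{a | f a = b} + if b = b₀ then 1 else 0 := by
    split_ifs with hb
    · exact hb ▸ h₀
    · exact h b hb
  calc k * Fintype.card β = ∑ _ : β, k := by simp [mul_comm]
    _ ≤ ∑ b : β, (#{a | f a = b} + if b = b₀ then 1 else 0) :=
      Finset.sum_le_sum fun b _ => hfiber b
    _ = Fintype.card α + 1 := by
      rw [Finset.sum_add_distrib, Finset.sum_ite_eq', if_pos (Finset.mem_univ _),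
        ← Finset.card_eq_sum_card_fiberwise fun _ _ => Finset.mem_univ _, Finset.card_univ]

theorem numOrbits_pos {α : Type*} [Finite α] [Nonempty α] (f : α → α) : 0 < numOrbits f :=
  Nat.card_pos_iff.mpr ⟨⟨Quotient.mk _ (Classical.arbitrary α)⟩, inferInstance⟩

theorem finite_sigma_nat_of_isEmpty_of_le {β : ℕ → Type*} [∀ n, Finite (β n)] (M : ℕ)
    (h : ∀ n, M ≤ n → IsEmpty (β n)) : Finite (Σ n, β n) := by
  refine Finite.of_surjective (fun x : Σ i : Fin M, β i => ⟨x.1, x.2⟩) fun ⟨n, b⟩ => ?_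
  have hn : n < M := by
    by_contra! hn
    exact (h n hn).false b
  exact ⟨⟨⟨n, hn⟩, b⟩, rfl⟩

namespace Equiv.Perm

variable {α : Type*}

theorem eqvGen_apply_eq_iff_sameCycle (σ : Perm α) {x y : α} :
    Relation.EqvGen (fun a b => σ a = b) x y ↔ σ.SameCycle x y := by
  constructor
  · intro h
    induction h with
    | rel a b hab => exact ⟨1, by simpa using hab⟩
    | refl a => exact .refl σ a
    | symm _ _ _ ih => exact ih.symm
    | trans _ _ _ _ _ ih₁ ih₂ => exact ih₁.trans ih₂
  · rintro ⟨k, rfl⟩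
    induction k using Int.induction_on with
    | zero => exact .refl x
    | succ k ih =>
      refine .trans _ _ _ ih (.rel _ _ ?_)
      rw [← mul_apply, ← zpow_one_add, add_comm]
    | pred k ih =>
      refine .trans _ _ _ ih (.symm _ _ (.rel _ _ ?_))
      rw [← mul_apply, ← zpow_one_add, add_sub_cancel]

theorem numOrbits_eq_nat_card_quotient_sameCycle (σ : Perm α) :
    numOrbits σ = Nat.card (Quotient (SameCycle.setoid σ)) := by
  rw [numOrbits, show Relation.EqvGen.setoid (fun a b => σ a = b) = SameCycle.setoid σ from
    Setoid.ext fun _ _ => eqvGen_apply_eq_iff_sameCycle σ]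

variable [Fintype α] [DecidableEq α]

theorem numOrbits_eq_card_cycleType {σ : Perm α} (hσ : ∀ x, σ x ≠ x) :
    numOrbits σ = Multiset.card σ.cycleType := by
  have hsupp (x : α) : x ∈ σ.support := mem_support.mpr (hσ x)
  let F : Quotient (SameCycle.setoid σ) → σ.cycleFactorsFinset :=
    Quotient.lift (fun x => ⟨σ.cycleOf x, cycleOf_mem_cycleFactorsFinset_iff.mpr (hsupp x)⟩)
      fun _ _ h => Subtype.ext h.cycleOf_eq
  have hF : Function.Bijective F := by
    constructor
    · rintro ⟨x⟩ ⟨y⟩ hxy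
      exact Quotient.sound <| (sameCycle_iff_cycleOf_eq_of_mem_support (hsupp x) (hsupp y)).mpr
        (congrArg Subtype.val hxy)
    · rintro ⟨c, hc⟩
      obtain ⟨x, hx, -⟩ := (mem_cycleFactorsFinset_iff.mp hc).1
      exact ⟨⟦x⟧, Subtype.ext (cycle_is_cycleOf (mem_support.mpr hx) hc).symm⟩
  rw [numOrbits_eq_nat_card_quotient_sameCycle, Nat.card_eq_of_bijective F hF,
    Nat.card_eq_fintype_card, Fintype.card_coe, cycleType_def, Multiset.card_map]
  rfl

theorem sign_eq_neg_one_pow_card_add_numOrbits {σ : Perm α} (hσ : ∀ x, σ x ≠ x) :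
    sign σ = (-1) ^ (Fintype.card α + numOrbits σ) := by
  have hsupp : σ.support = univ := Finset.eq_univ_of_forall fun x => mem_support.mpr (hσ x)
  rw [sign_of_cycleType, sum_cycleType, hsupp, Finset.card_univ, numOrbits_eq_card_cycleType hσ]

theorem three_mul_numOrbits_le {σ : Perm α} (z : α) (hσ : ∀ x, σ x ≠ x)
    (hσ₂ : ∀ x, σ (σ x) = x → x = z ∨ σ x = z) :
    3 * numOrbits σ ≤ Fintype.card α + 1 := by
  classical
  let _ : Fintype (Quotient (SameCycle.setoid σ)) := Fintype.ofFinite _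
  have hmk (x : α) : (⟦σ x⟧ : Quotient (SameCycle.setoid σ)) = ⟦x⟧ :=
    Quotient.sound (sameCycle_apply_left.mpr SameCycle.rfl)
  have hclass (x : α) : ({x, σ x, σ (σ x)} : Finset α) ⊆
      ({y | (⟦y⟧ : Quotient (SameCycle.setoid σ)) = ⟦x⟧} : Finset α) := by
    intro y hy
    simp only [Finset.mem_insert, Finset.mem_singleton] at hy
    rcases hy with rfl | rfl | rfl <;> simp [hmk]
  rw [numOrbits_eq_nat_card_quotient_sameCycle, Nat.card_eq_fintype_card]
  refine Fintype.mul_card_le_card_add_one (Quotient.mk _) ⟦z⟧ ?_ fun q hq => ?_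
  · have hpair : ({z, σ z} : Finset α) ⊆ {z, σ z, σ (σ z)} := by simp [Finset.subset_iff]
    have := (Finset.card_pair (hσ z).symm).symm.le.trans
      ((Finset.card_le_card hpair).trans (Finset.card_le_card (hclass z)))
    omega
  · induction q using Quotient.inductionOn with | h x => ?_
    have hx₂ : σ (σ x) ≠ x := by
      intro h
      rcases hσ₂ x h with rfl | h
      · exact hq rfl
      · exact hq (by rw [← h, hmk])
    have htriple : #({x, σ x, σ (σ x)} : Finset α) = 3 :=
      Finset.card_eq_three.mpr ⟨x, σ x, σ (σ x), (hσ x).symm, hx₂.symm,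
        fun h => hσ x (σ.injective h).symm, rfl⟩
    exact htriple ▸ Finset.card_le_card (hclass x)

end Equiv.Perm

theorem Fin.val_finRotate {N : ℕ} (i : Fin N) :
    (finRotate N i : ℕ) = if (i : ℕ) + 1 = N then 0 else (i : ℕ) + 1 := by
  cases N with
  | zero => exact i.elim0
  | succ n =>
    rw [coe_finRotate]
    simp [Fin.ext_iff]

section Diagram

variable {N : ℕ} {μ : Perm (Fin N)}

def boundaryPerm (μ : Perm (Fin N)) : Perm (Fin N) :=
  finRotate N * μ

theorem numBoundary_eq_numOrbits_boundaryPerm (μ : Perm (Fin N)) :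
    numBoundary μ = numOrbits (boundaryPerm μ) :=
  rfl

theorem IsMatching.sign_eq_neg_one_pow (h : IsMatching μ) : Perm.sign μ = (-1) ^ (N / 2) := by
  have hsq : μ ^ 2 = 1 := by
    ext i
    simp [sq, h.1]
  have hfix : Fintype.card (Function.fixedPoints μ) = 0 :=
    Fintype.card_eq_zero_iff.mpr ⟨fun ⟨x, hx⟩ => h.2 x hx⟩
  rw [Perm.sign_of_pow_two_eq_one hsq, hfix, Fintype.card_fin, Nat.sub_zero]

theorem IsShadow.finRotate_ne (h : IsShadow μ) (i : Fin N) : finRotate N i ≠ μ i := by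
  -- otherwise the arc `{i, μ i}` joins neighbours on the closed-up backbone and crosses nothing
  obtain ⟨⟨hμμ, hμne⟩, hcross, -⟩ := h
  intro hi
  have hrot := Fin.val_finRotate i
  rw [hi] at hrot
  have hne : (μ i : ℕ) ≠ i := fun h => hμne i (Fin.ext h)
  by_cases hleft : (i : ℕ) < μ i
  · obtain ⟨k, hk⟩ := hcross i hleft
    have := (μ k).isLt
    simp only [CrossSym, Cross] at hk
    split_ifs at hrot <;> omega
  · obtain ⟨k, hk⟩ := hcross (μ i) (by rw [IsLeft, hμμ]; omega)
    have := (μ k).isLt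
    simp only [CrossSym, Cross, hμμ] at hk
    split_ifs at hrot <;> omega

theorem IsShadow.boundaryPerm_apply_ne (h : IsShadow μ) (v : Fin N) : boundaryPerm μ v ≠ v :=
  fun hv => h.finRotate_ne (μ v) (hv.trans (h.1.1 v).symm)

theorem IsShadow.eq_zero_of_boundaryPerm_apply_apply_eq [NeZero N] (h : IsShadow μ) {v : Fin N}
    (hv : boundaryPerm μ (boundaryPerm μ v) = v) : v = 0 ∨ boundaryPerm μ v = 0 := by
  have hvw := h.boundaryPerm_apply_ne v
  obtain ⟨⟨hμμ, hμne⟩, -, hstack⟩ := h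
  have no_swap (a b : Fin N) (hab : (a : ℕ) < b) (ha : (μ a : ℕ) + 1 = b)
      (hb : (μ b : ℕ) + 1 = a) : False := by
    have := Fin.val_ne_iff.mpr (hμne a)
    -- the arcs `(μ b, b)` and `(a, μ a)` form a stack
    refine hstack ⟨μ b, a, ?_, ?_, by omega, by rw [hμμ]; omega⟩
    · rw [IsLeft, hμμ]; omega
    · rw [IsLeft]; omega
  set w := boundaryPerm μ v
  have hv' := Fin.val_finRotate (μ v)
  have hw' := Fin.val_finRotate (μ w)
  rw [show finRotate N (μ v) = w from rfl] at hv'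
  rw [show finRotate N (μ w) = v from hv] at hw'
  simp only [Fin.ext_iff, Fin.val_zero]
  by_contra! hne
  have := Fin.val_ne_iff.mpr hvw
  split_ifs at hv' hw' <;> try omega
  rcases Nat.lt_or_gt_of_ne this with hlt | hlt
  · exact no_swap w v hlt hw'.symm hv'.symm
  · exact no_swap v w hlt hv'.symm hw'.symm

theorem IsShadow.three_mul_numBoundary_le [NeZero N] (h : IsShadow μ) :
    3 * numBoundary μ ≤ N + 1 := by
  rw [numBoundary_eq_numOrbits_boundaryPerm]
  simpa using Perm.three_mul_numOrbits_le 0 h.boundaryPerm_apply_ne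
    fun v hv => h.eq_zero_of_boundaryPerm_apply_apply_eq hv

theorem IsShadow.odd_numBoundary_add {m : ℕ} [NeZero m] {μ : Perm (Fin (2 * m))}
    (h : IsShadow μ) : Odd (numBoundary μ + m) := by
  have hsign := Perm.sign_eq_neg_one_pow_card_add_numOrbits h.boundaryPerm_apply_ne
  rw [← numBoundary_eq_numOrbits_boundaryPerm, boundaryPerm, map_mul, sign_finRotate,
    h.1.sign_eq_neg_one_pow, ← pow_add, Fintype.card_fin] at hsign
  have heven : Even (2 * m - 1 + 2 * m / 2 + (2 * m + numBoundary μ)) :=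
    (neg_one_pow_eq_one_iff_even (R := ℤˣ) (by decide)).mp
      (by rw [pow_add, hsign, Int.units_mul_self])
  have := NeZero.ne m
  rw [Nat.even_iff] at heven
  rw [Nat.odd_iff]
  omega

theorem IsShadow.arc_bounds {m : ℕ} {μ : Perm (Fin (2 * m))} (h : IsShadow μ)
    (hg : 1 ≤ diagGenus μ) : 2 * diagGenus μ ≤ m ∧ m ≤ 6 * diagGenus μ - 2 := by
  unfold diagGenus at hg ⊢
  have : NeZero m := ⟨by rintro rfl; omega⟩
  have hpos : 0 < numBoundary μ := numOrbits_pos _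
  have hle := h.three_mul_numBoundary_le
  -- the parity makes the division in `diagGenus` exact: `2 * g = m + 1 - numBoundary μ`
  obtain ⟨k, hk⟩ := h.odd_numBoundary_add
  omega

end Diagram

/-- Every shadow of genus `g ≥ 1` (on `2m` vertices, hence with `m` arcs) has at
least `2g` and at most `6g-2` arcs; consequently for fixed `g ≥ 1` there are only
finitely many shadows of genus `g`. -/
theorem shadow_arc_bounds_and_finiteness :
    (∀ (m : ℕ) (μ : Equiv.Perm (Fin (2 * m))), IsShadow μ → 1 ≤ diagGenus μ →
      2 * diagGenus μ ≤ m ∧ m ≤ 6 * diagGenus μ - 2) ∧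
    (∀ g : ℕ, 1 ≤ g →
      Finite ((m : ℕ) × {μ : Equiv.Perm (Fin (2 * m)) // IsShadow μ ∧ diagGenus μ = g})) := by
  refine ⟨fun m μ h hg => h.arc_bounds hg, fun g hg => ?_⟩
  refine finite_sigma_nat_of_isEmpty_of_le (6 * g) fun m hm => ⟨fun ⟨μ, h, hμg⟩ => ?_⟩
  have := (h.arc_bounds (hμg ▸ hg)).2
  omega
end
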